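/- Let L be a strictly lower triangular real n×n matrix, D a diagonal real n×n matrix with positive diagonal entries, and D^{−1/2} the diagonal matrix with entries (D_ii)^{−1/2}. Let μ := λ_min(D^{−1/2}(L + Lᵀ)D^{−1/2}) + 1 and ρ_s := λ_max(D^{−1/2}(L + Lᵀ)D^{−1/2}) + 2 λ_max(D^{−1/2} L D⁻¹ Lᵀ D^{−1/2}) + 1, where λ_min and λ_max denote the least and greatest elements of the real spectrum of the indicated symmetric matrices. For ω ∈ ℝ, define the symmetric matrix G(ω) := (ω² − 2ω + 2) I + ω² D^{−1/2}(L + Lᵀ)D^{−1/2} + 2ω² D^{−1/2} L D⁻¹ Lᵀ D^{−1/2}. Then every eigenvalue λ in the real spectrum of G(ω) satisfies μω² − 2ω + 2 ≤ λ ≤ ρ_s ω² − 2ω + 2. -/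

import Mathlib

open Matrix

/-- The diagonal matrix `D^{-1/2}` with entries `(D_ii)^{-1/2}`. -/
noncomputable def dhalf {n : ℕ} (D : Matrix (Fin n) (Fin n) ℝ) :
    Matrix (Fin n) (Fin n) ℝ :=
  Matrix.diagonal fun i => (Real.sqrt (D i i))⁻¹

/-- The symmetric matrix
`G(ω) = (ω² − 2ω + 2) I + ω² D^{-1/2}(L + Lᵀ)D^{-1/2} + 2ω² D^{-1/2} L D⁻¹ Lᵀ D^{-1/2}`. -/
noncomputable def ssorG {n : ℕ} (L D : Matrix (Fin n) (Fin n) ℝ) (ω : ℝ) :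
    Matrix (Fin n) (Fin n) ℝ :=
  (ω ^ 2 - 2 * ω + 2) • (1 : Matrix (Fin n) (Fin n) ℝ) +
    ω ^ 2 • (dhalf D * (L + Lᵀ) * dhalf D) +
    (2 * ω ^ 2) • (dhalf D * L * D⁻¹ * Lᵀ * dhalf D)

open scoped MatrixOrder

section SpectralBounds

variable {A : Type*} [TopologicalSpace A] [Ring A] [StarRing A] [PartialOrder A]
  [StarOrderedRing A] [Algebra ℝ A] [StarModule ℝ A]
  [ContinuousFunctionalCalculus ℝ A IsSelfAdjoint] [NonnegSpectrumClass ℝ A]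

/-- In the Loewner order, spectral bounds of a self-adjoint element are order bounds against
scalars, and these survive nonnegative linear combinations. -/
theorem spectrum_algebraMap_add_smul_add_smul_subset_Icc {a b : A} (ha : IsSelfAdjoint a)
    (hb : 0 ≤ b) {c t s α β γ : ℝ} (ht : 0 ≤ t) (hs : 0 ≤ s)
    (hα : ∀ x ∈ spectrum ℝ a, α ≤ x) (hβ : ∀ x ∈ spectrum ℝ a, x ≤ β)
    (hγ : ∀ x ∈ spectrum ℝ b, x ≤ γ) :
    spectrum ℝ (algebraMap ℝ A c + t • a + s • b) ⊆
      Set.Icc (c + t * α) (c + t * β + s * γ) := by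
  have hsa : IsSelfAdjoint (algebraMap ℝ A c + t • a + s • b) :=
    ((IsSelfAdjoint.algebraMap A (.all c)).add ((IsSelfAdjoint.all t).smul ha)).add
      ((IsSelfAdjoint.all s).smul hb.isSelfAdjoint)
  have haα : algebraMap ℝ A α ≤ a := (algebraMap_le_iff_le_spectrum ha).2 hα
  have haβ : a ≤ algebraMap ℝ A β := (le_algebraMap_iff_spectrum_le ha).2 hβ
  have hbγ : b ≤ algebraMap ℝ A γ := (le_algebraMap_iff_spectrum_le hb.isSelfAdjoint).2 hγ
  have hlow : algebraMap ℝ A (c + t * α) ≤ algebraMap ℝ A c + t • a + s • b := calc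
    algebraMap ℝ A (c + t * α) = algebraMap ℝ A c + t • algebraMap ℝ A α + s • (0 : A) := by
      simp [Algebra.smul_def]
    _ ≤ _ := by gcongr
  have hup : algebraMap ℝ A c + t • a + s • b ≤ algebraMap ℝ A (c + t * β + s * γ) := calc
    _ ≤ algebraMap ℝ A c + t • algebraMap ℝ A β + s • algebraMap ℝ A γ := by gcongr
    _ = _ := by simp [Algebra.smul_def]
  intro x hx
  exact ⟨(algebraMap_le_iff_le_spectrum hsa).1 hlow x hx,
    (le_algebraMap_iff_spectrum_le hsa).1 hup x hx⟩

end SpectralBounds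

theorem Matrix.IsDiag.posSemidef {n R : Type*} [Fintype n] [CommRing R] [PartialOrder R]
    [StarRing R] [StarOrderedRing R] {D : Matrix n n R} (hD : D.IsDiag)
    (h : ∀ i, 0 ≤ D i i) : D.PosSemidef := by
  classical
  rw [← hD.diagonal_diag]
  exact posSemidef_diagonal_iff.2 h

section SSOR

variable {n : ℕ}

theorem isHermitian_dhalf (D : Matrix (Fin n) (Fin n) ℝ) : (dhalf D).IsHermitian :=
  isHermitian_diagonal _

theorem isSelfAdjoint_dhalf_mul_add_transpose_mul_dhalf (L D : Matrix (Fin n) (Fin n) ℝ) :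
    IsSelfAdjoint (dhalf D * (L + Lᵀ) * dhalf D) := by
  refine IsSelfAdjoint.conjugate_self ?_ (isHermitian_dhalf D)
  simpa [star_eq_conjTranspose] using IsSelfAdjoint.add_star_self L

theorem dhalf_mul_mul_inv_mul_transpose_mul_dhalf_nonneg {L D : Matrix (Fin n) (Fin n) ℝ}
    (hD : D.IsDiag) (hDpos : ∀ i, 0 < D i i) :
    0 ≤ dhalf D * L * D⁻¹ * Lᵀ * dhalf D := by
  have h := ((hD.posSemidef fun i => (hDpos i).le).inv).mul_mul_conjTranspose_same (dhalf D * L)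
  rw [conjTranspose_mul, conjTranspose_eq_transpose_of_trivial, (isHermitian_dhalf D).eq,
    ← mul_assoc] at h
  exact h.nonneg

theorem ssorG_eq (L D : Matrix (Fin n) (Fin n) ℝ) (ω : ℝ) :
    ssorG L D ω = algebraMap ℝ _ (ω ^ 2 - 2 * ω + 2) + ω ^ 2 • (dhalf D * (L + Lᵀ) * dhalf D) +
      (2 * ω ^ 2) • (dhalf D * L * D⁻¹ * Lᵀ * dhalf D) := by
  rw [ssorG, Algebra.algebraMap_eq_smul_one]

end SSOR

theorem stmt_18_general {n : ℕ} (L D : Matrix (Fin n) (Fin n) ℝ)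
    (hD : D.IsDiag) (hDpos : ∀ i, 0 < D i i)
    -- `lmin` is the least element of the real spectrum of `D^{-1/2}(L + Lᵀ)D^{-1/2}`,
    -- so that `μ = lmin + 1`
    (lmin : ℝ)
    (hmin : ∀ lam ∈ spectrum ℝ (dhalf D * (L + Lᵀ) * dhalf D), lmin ≤ lam)
    -- `lmax₁` is the greatest element of the real spectrum of `D^{-1/2}(L + Lᵀ)D^{-1/2}`
    (lmax₁ : ℝ)
    (hmax₁ : ∀ lam ∈ spectrum ℝ (dhalf D * (L + Lᵀ) * dhalf D), lam ≤ lmax₁)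
    -- `lmax₂` is the greatest element of the real spectrum of `D^{-1/2} L D⁻¹ Lᵀ D^{-1/2}`,
    -- so that `ρ_s = lmax₁ + 2·lmax₂ + 1`
    (lmax₂ : ℝ)
    (hmax₂ : ∀ lam ∈ spectrum ℝ (dhalf D * L * D⁻¹ * Lᵀ * dhalf D), lam ≤ lmax₂)
    (ω : ℝ) :
    ∀ lam ∈ spectrum ℝ (ssorG L D ω),
      (lmin + 1) * ω ^ 2 - 2 * ω + 2 ≤ lam ∧
        lam ≤ (lmax₁ + 2 * lmax₂ + 1) * ω ^ 2 - 2 * ω + 2 := by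
  intro lam hlam
  rw [ssorG_eq] at hlam
  obtain ⟨hlow, hup⟩ := spectrum_algebraMap_add_smul_add_smul_subset_Icc
    (isSelfAdjoint_dhalf_mul_add_transpose_mul_dhalf L D)
    (dhalf_mul_mul_inv_mul_transpose_mul_dhalf_nonneg hD hDpos)
    (sq_nonneg ω) (by positivity) hmin hmax₁ hmax₂ hlam
  constructor <;> linarith

theorem stmt_18 {n : ℕ} (L D : Matrix (Fin n) (Fin n) ℝ)
    (hL : ∀ i j : Fin n, i ≤ j → L i j = 0)
    (hD : D.IsDiag) (hDpos : ∀ i, 0 < D i i)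
    -- `lmin` is the least element of the real spectrum of `D^{-1/2}(L + Lᵀ)D^{-1/2}`,
    -- so that `μ = lmin + 1`
    (lmin : ℝ)
    (hmemmin : lmin ∈ spectrum ℝ (dhalf D * (L + Lᵀ) * dhalf D))
    (hmin : ∀ lam ∈ spectrum ℝ (dhalf D * (L + Lᵀ) * dhalf D), lmin ≤ lam)
    -- `lmax₁` is the greatest element of the real spectrum of `D^{-1/2}(L + Lᵀ)D^{-1/2}`
    (lmax₁ : ℝ)
    (hmemmax₁ : lmax₁ ∈ spectrum ℝ (dhalf D * (L + Lᵀ) * dhalf D))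
    (hmax₁ : ∀ lam ∈ spectrum ℝ (dhalf D * (L + Lᵀ) * dhalf D), lam ≤ lmax₁)
    -- `lmax₂` is the greatest element of the real spectrum of `D^{-1/2} L D⁻¹ Lᵀ D^{-1/2}`,
    -- so that `ρ_s = lmax₁ + 2·lmax₂ + 1`
    (lmax₂ : ℝ)
    (hmemmax₂ : lmax₂ ∈ spectrum ℝ (dhalf D * L * D⁻¹ * Lᵀ * dhalf D))
    (hmax₂ : ∀ lam ∈ spectrum ℝ (dhalf D * L * D⁻¹ * Lᵀ * dhalf D), lam ≤ lmax₂)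
    (ω : ℝ) :
    ∀ lam ∈ spectrum ℝ (ssorG L D ω),
      (lmin + 1) * ω ^ 2 - 2 * ω + 2 ≤ lam ∧
        lam ≤ (lmax₁ + 2 * lmax₂ + 1) * ω ^ 2 - 2 * ω + 2 :=
  stmt_18_general L D hD hDpos lmin hmin lmax₁ hmax₁ lmax₂ hmax₂ ω
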